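/- For all natural numbers p, q, there are isomorphisms of real algebras Cl_{p+2,q}(ℝ) ≅ Cl_{q,p}(ℝ) ⊗_ℝ M₂(ℝ) and Cl_{p,q+2}(ℝ) ≅ Cl_{q,p}(ℝ) ⊗_ℝ ℍ. -/

import Mathlib

open scoped TensorProduct

/-- The real Clifford algebra `Cl_{p,q}(ℝ)` of the quadratic form
`x₁² + … + x_p² − x_{p+1}² − … − x_{p+q}²`. -/
abbrev CliffordPQ (p q : ℕ) : Type :=
  CliffordAlgebra (QuadraticMap.weightedSumSquares ℝ
    (fun i : Fin (p + q) => if (i : ℕ) < p then (1 : ℝ) else -1))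

/-!
Let `P = c₁ x² + c₂ y²` be a plane form with `c₁ c₂ = 1`, so that `Cl(P) = ℍ[c₁, c₂]` and
`k = i j` squares to `-1` and anticommutes with `i` and `j`. For any quadratic form `Q`, the map
`(u, m) ↦ ι m ⊗ k + 1 ⊗ u` is a Clifford map for `P ⊕ Q` into `Cl(-Q) ⊗ ℍ[c₁, c₂]`: its two
summands anticommute and square to `Q m` and `P u`. Conversely, for `K = e₁ e₂ ∈ Cl(P ⊕ Q)` the
element `ι m · K` squares to `-Q m`, since `ι m` commutes with `K`, and it commutes with the
plane, since both factors anticommute with it; so `ι m ↦ -(ι m · K)` and `Cl(P) ↪ Cl(P ⊕ Q)`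
give the inverse map `Cl(-Q) ⊗ ℍ[c₁, c₂] → Cl(P ⊕ Q)`.

The signature `(p + 2, q)` splits off `x² + y²`, with `ℍ[1, 1] ≅ M₂(ℝ)`, and `(p, q + 2)` splits
off `-x² - y²`, with `ℍ[-1, -1] = ℍ`; in both cases `-Q` has signature `(q, p)`.
-/

open CliffordAlgebra QuadraticMap
open scoped Quaternion

theorem add_mul_self_of_anticommute {A : Type*} [NonUnitalNonAssocSemiring A] {x y : A}
    (h : x * y + y * x = 0) : (x + y) * (x + y) = x * x + y * y := by
  rw [add_mul, mul_add, mul_add, add_assoc, ← add_assoc (x * y), h, zero_add]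

theorem commute_mul_of_anticommute {A : Type*} [Semigroup A] [HasDistribNeg A] {a b x : A}
    (ha : a * x = -(x * a)) (hb : b * x = -(x * b)) : Commute (a * b) x := by
  rw [Commute, SemiconjBy, mul_assoc, hb, mul_neg, ← mul_assoc, ha, neg_mul, neg_neg, mul_assoc]

namespace QuadraticMap

section CommSemiring

variable {R ι κ : Type*} [CommSemiring R] [Fintype ι] [Fintype κ]

def IsometryEquiv.ofEq {M N : Type*} [AddCommMonoid M] [Module R M] [AddCommMonoid N] [Module R N]
    {Q₁ Q₂ : QuadraticMap R M N} (h : Q₁ = Q₂) : Q₁.IsometryEquiv Q₂ where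
  toLinearEquiv := LinearEquiv.refl R M
  map_app' _ := by rw [h]; rfl

def weightedSumSquaresReindex (e : ι ≃ κ) {v : ι → R} {w : κ → R} (h : ∀ i, w (e i) = v i) :
    (weightedSumSquares R v).IsometryEquiv (weightedSumSquares R w) where
  toLinearEquiv := LinearEquiv.funCongrLeft R R e.symm
  map_app' x := by
    simp only [weightedSumSquares_apply, ← h]
    exact (Fintype.sum_equiv e _ _ fun i => by simp [LinearEquiv.funCongrLeft_apply]).symm

def weightedSumSquaresSumElimEquiv (v : ι → R) (w : κ → R) :
    (weightedSumSquares R (Sum.elim v w)).IsometryEquiv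
      ((weightedSumSquares R v).prod (weightedSumSquares R w)) where
  toLinearEquiv := LinearEquiv.sumArrowLequivProdArrow ι κ R R
  map_app' x := by
    simp [weightedSumSquares_apply, Fintype.sum_sum_type]

end CommSemiring

section CommRing

variable {R ι : Type*} [CommRing R] [Fintype ι]

theorem weightedSumSquares_neg (w : ι → R) :
    weightedSumSquares R (-w) = -weightedSumSquares R w := by
  ext x
  simp [weightedSumSquares_apply]

def weightedSumSquaresFinTwoEquivQ (w : Fin 2 → R) :
    (weightedSumSquares R w).IsometryEquiv (CliffordAlgebraQuaternion.Q (w 0) (w 1)) where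
  toLinearEquiv := LinearEquiv.finTwoArrow R R
  map_app' x := by
    simp [weightedSumSquares_apply, Fin.sum_univ_two]

def weightedSumSquaresSumElimFinTwoEquiv (c : R) (w : ι → R) :
    (weightedSumSquares R (Sum.elim (fun _ : Fin 2 => c) w)).IsometryEquiv
      ((CliffordAlgebraQuaternion.Q c c).prod (weightedSumSquares R w)) :=
  (weightedSumSquaresSumElimEquiv _ _).trans
    ((weightedSumSquaresFinTwoEquivQ _).prod (IsometryEquiv.refl _))

end CommRing

end QuadraticMap

namespace CliffordAlgebra

variable {R : Type*} [CommRing R]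

theorem commute_of_commute_ι {M₁ M₂ A : Type*} [AddCommGroup M₁] [Module R M₁]
    [AddCommGroup M₂] [Module R M₂] [Ring A] [Algebra R A]
    {Q₁ : QuadraticForm R M₁} {Q₂ : QuadraticForm R M₂}
    (f : CliffordAlgebra Q₁ →ₐ[R] A) (g : CliffordAlgebra Q₂ →ₐ[R] A)
    (h : ∀ m₁ m₂, Commute (f (ι Q₁ m₁)) (g (ι Q₂ m₂))) (x : CliffordAlgebra Q₁)
    (y : CliffordAlgebra Q₂) : Commute (f x) (g y) := by
  induction y using CliffordAlgebra.induction with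
  | algebraMap r => rw [AlgHom.commutes]; exact Algebra.commute_algebraMap_right r _
  | add a b ha hb => rw [map_add]; exact ha.add_right hb
  | mul a b ha hb => rw [map_mul]; exact ha.mul_right hb
  | ι m₂ =>
    induction x using CliffordAlgebra.induction with
    | algebraMap r => rw [AlgHom.commutes]; exact Algebra.commute_algebraMap_left r _
    | add a b ha hb => rw [map_add]; exact ha.add_left hb
    | mul a b ha hb => rw [map_mul]; exact ha.mul_left hb
    | ι m₁ => exact h m₁ m₂

namespace QuaternionPlane

variable {M : Type*} [AddCommGroup M] [Module R M] (Q : QuadraticForm R M) {c₁ c₂ : R}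

local notation "Qc" => CliffordAlgebraQuaternion.Q c₁ c₂
local notation "𝐤" => (⟨0, 0, 0, 1⟩ : ℍ[R,c₁,0,c₂])

theorem quaternion_k_mul_self (h : c₁ * c₂ = 1) : 𝐤 * 𝐤 = -1 := by
  ext <;> simp [h]

theorem quaternion_k_mul_mk (x y : R) :
    𝐤 * ⟨0, x, y, 0⟩ = -((⟨0, x, y, 0⟩ : ℍ[R,c₁,0,c₂]) * 𝐤) := by
  ext <;> simp

theorem ι_tmul_k_add_one_tmul_mul_self (h : c₁ * c₂ = 1) (v : (R × R) × M) :
    (ι (-Q) v.2 ⊗ₜ[R] 𝐤 + 1 ⊗ₜ ⟨0, v.1.1, v.1.2, 0⟩) *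
      (ι (-Q) v.2 ⊗ₜ[R] 𝐤 + 1 ⊗ₜ ⟨0, v.1.1, v.1.2, 0⟩) =
      algebraMap R _ (QuadraticMap.prod Qc Q v) := by
  rw [add_mul_self_of_anticommute]
  · simp only [Algebra.TensorProduct.tmul_mul_tmul, ι_sq_scalar, one_mul, quaternion_k_mul_self h]
    rw [← CliffordAlgebraQuaternion.toQuaternion_ι, ← map_mul, ι_sq_scalar, AlgHom.commutes]
    simp only [Algebra.algebraMap_eq_smul_one, ← TensorProduct.smul_tmul', TensorProduct.tmul_smul,
      TensorProduct.tmul_neg, Algebra.TensorProduct.one_def, neg_apply, QuadraticMap.prod_apply]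
    module
  · simp only [Algebra.TensorProduct.tmul_mul_tmul, one_mul, mul_one, ← TensorProduct.tmul_add,
      quaternion_k_mul_mk, neg_add_cancel, TensorProduct.tmul_zero]

def toTensor (h : c₁ * c₂ = 1) :
    CliffordAlgebra (QuadraticMap.prod Qc Q) →ₐ[R] CliffordAlgebra (-Q) ⊗[R] ℍ[R,c₁,0,c₂] :=
  lift _ ⟨(TensorProduct.mk R _ _).flip 𝐤 ∘ₗ ι (-Q) ∘ₗ LinearMap.snd R (R × R) M +
    Algebra.TensorProduct.includeRight.toLinearMap ∘ₗ
      CliffordAlgebraQuaternion.toQuaternion.toLinearMap ∘ₗ ι Qc ∘ₗ LinearMap.fst R (R × R) M,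
    fun v => by simpa using ι_tmul_k_add_one_tmul_mul_self Q h v⟩

@[simp]
theorem toTensor_ι (h : c₁ * c₂ = 1) (v : (R × R) × M) :
    toTensor Q h (ι _ v) = ι (-Q) v.2 ⊗ₜ[R] 𝐤 + 1 ⊗ₜ ⟨0, v.1.1, v.1.2, 0⟩ := by
  rw [toTensor, lift_ι_apply]
  simp

theorem toTensor_ι_inr (h : c₁ * c₂ = 1) (m : M) :
    toTensor Q h (ι _ (0, m)) = ι (-Q) m ⊗ₜ[R] 𝐤 := by
  rw [toTensor_ι]
  exact add_eq_left.mpr (TensorProduct.tmul_zero _ _)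

theorem toTensor_map_inl (h : c₁ * c₂ = 1) (z : CliffordAlgebra Qc) :
    toTensor Q h (map (QuadraticMap.Isometry.inl Qc Q) z) =
      1 ⊗ₜ CliffordAlgebraQuaternion.toQuaternion z := by
  have : (toTensor Q h).comp (map (QuadraticMap.Isometry.inl Qc Q)) =
      Algebra.TensorProduct.includeRight.comp CliffordAlgebraQuaternion.toQuaternion :=
    CliffordAlgebra.hom_ext (LinearMap.ext fun u => by simp)
  exact AlgHom.congr_fun this z

def ofQuaternion : ℍ[R,c₁,0,c₂] →ₐ[R] CliffordAlgebra (QuadraticMap.prod Qc Q) :=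
  (map (QuadraticMap.Isometry.inl Qc Q)).comp CliffordAlgebraQuaternion.ofQuaternion

theorem ofQuaternion_mk (x y : R) :
    ofQuaternion Q (⟨0, x, y, 0⟩ : ℍ[R,c₁,0,c₂]) = ι _ ((x, y), 0) := by
  rw [ofQuaternion, AlgHom.comp_apply, ← CliffordAlgebraQuaternion.toQuaternion_ι (x, y),
    CliffordAlgebraQuaternion.ofQuaternion_toQuaternion, map_apply_ι,
    QuadraticMap.Isometry.inl_apply]

theorem ofQuaternion_k : ofQuaternion Q 𝐤 = ι _ ((1, 0), 0) * ι _ ((0, 1), 0) := by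
  simp [ofQuaternion]

theorem toTensor_ofQuaternion (h : c₁ * c₂ = 1) (y : ℍ[R,c₁,0,c₂]) :
    toTensor Q h (ofQuaternion Q y) = 1 ⊗ₜ y := by
  rw [ofQuaternion, AlgHom.comp_apply, toTensor_map_inl,
    CliffordAlgebraQuaternion.toQuaternion_ofQuaternion]

theorem ofQuaternion_k_mul_self (h : c₁ * c₂ = 1) :
    ofQuaternion Q 𝐤 * ofQuaternion Q 𝐤 = -1 := by
  rw [← map_mul, quaternion_k_mul_self h, map_neg, map_one]

theorem ofQuaternion_k_mul_ι_inl (x y : R) :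
    ofQuaternion Q 𝐤 * ι _ ((x, y), 0) = -(ι _ ((x, y), 0) * ofQuaternion Q 𝐤) := by
  rw [← ofQuaternion_mk, ← map_mul, ← map_mul, quaternion_k_mul_mk, map_neg]

theorem commute_ofQuaternion_k_ι_inr (m : M) :
    Commute (ofQuaternion Q 𝐤) (ι _ ((0 : R × R), m)) := by
  rw [ofQuaternion_k]
  exact commute_mul_of_anticommute (ι_mul_ι_comm_of_isOrtho (IsOrtho.inl_inr _ _))
    (ι_mul_ι_comm_of_isOrtho (IsOrtho.inl_inr _ _))

theorem ι_inr_mul_ofQuaternion_k_mul_self (h : c₁ * c₂ = 1) (m : M) :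
    (ι (QuadraticMap.prod Qc Q) (0, m) * ofQuaternion Q 𝐤) * (ι _ (0, m) * ofQuaternion Q 𝐤) =
      algebraMap R _ ((-Q) m) := by
  rw [mul_assoc, ← mul_assoc (ofQuaternion Q _), (commute_ofQuaternion_k_ι_inr Q m).eq, mul_assoc,
    ofQuaternion_k_mul_self Q h, ← mul_assoc, ι_sq_scalar, mul_neg_one, ← map_neg]
  simp

def ofNeg (h : c₁ * c₂ = 1) : CliffordAlgebra (-Q) →ₐ[R] CliffordAlgebra (QuadraticMap.prod Qc Q) :=
  lift _ ⟨-(LinearMap.mulRight R (ofQuaternion Q 𝐤) ∘ₗ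
    ι (QuadraticMap.prod Qc Q) ∘ₗ LinearMap.inr R (R × R) M),
    fun m => by simpa using ι_inr_mul_ofQuaternion_k_mul_self Q h m⟩

@[simp]
theorem ofNeg_ι (h : c₁ * c₂ = 1) (m : M) :
    ofNeg Q h (ι _ m) = -(ι _ (0, m) * ofQuaternion Q 𝐤) := by
  rw [ofNeg, lift_ι_apply]
  simp

theorem commute_ofNeg_ofQuaternion (h : c₁ * c₂ = 1) (x : CliffordAlgebra (-Q))
    (y : ℍ[R,c₁,0,c₂]) : Commute (ofNeg Q h x) (ofQuaternion Q y) :=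
  commute_of_commute_ι (ofNeg Q h) (map (QuadraticMap.Isometry.inl Qc Q))
    (fun m u => by
      rw [ofNeg_ι, map_apply_ι, QuadraticMap.Isometry.inl_apply]
      exact (commute_mul_of_anticommute (ι_mul_ι_comm_of_isOrtho (IsOrtho.inr_inl _ _))
        (ofQuaternion_k_mul_ι_inl Q u.1 u.2)).neg_left)
    x (CliffordAlgebraQuaternion.ofQuaternion y)

def ofTensor (h : c₁ * c₂ = 1) :
    CliffordAlgebra (-Q) ⊗[R] ℍ[R,c₁,0,c₂] →ₐ[R] CliffordAlgebra (QuadraticMap.prod Qc Q) :=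
  Algebra.TensorProduct.lift (ofNeg Q h) (ofQuaternion Q) (commute_ofNeg_ofQuaternion Q h)

theorem ofTensor_comp_toTensor (h : c₁ * c₂ = 1) :
    (ofTensor Q h).comp (toTensor Q h) = AlgHom.id R _ := by
  refine CliffordAlgebra.hom_ext (LinearMap.ext fun ⟨⟨x, y⟩, m⟩ => ?_)
  dsimp
  rw [toTensor_ι, map_add, ofTensor, Algebra.TensorProduct.lift_tmul,
    Algebra.TensorProduct.lift_tmul, map_one, one_mul, ofNeg_ι, ofQuaternion_mk, neg_mul, mul_assoc,
    ofQuaternion_k_mul_self Q h, mul_neg_one, neg_neg, ← map_add]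
  simp

theorem toTensor_comp_ofTensor (h : c₁ * c₂ = 1) :
    (toTensor Q h).comp (ofTensor Q h) = AlgHom.id R _ := by
  refine Algebra.TensorProduct.ext
    (CliffordAlgebra.hom_ext (LinearMap.ext fun m => ?_)) (AlgHom.ext fun y => ?_)
  · change toTensor Q h (ofTensor Q h (ι (-Q) m ⊗ₜ 1)) = ι (-Q) m ⊗ₜ 1
    rw [ofTensor, Algebra.TensorProduct.lift_tmul, map_one, mul_one, ofNeg_ι, map_neg, map_mul,
      toTensor_ofQuaternion, toTensor_ι_inr, Algebra.TensorProduct.tmul_mul_tmul, mul_one,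
      quaternion_k_mul_self h, TensorProduct.tmul_neg, neg_neg]
  · change toTensor Q h (ofTensor Q h (1 ⊗ₜ y)) = 1 ⊗ₜ y
    rw [ofTensor, Algebra.TensorProduct.lift_tmul, map_one, one_mul, toTensor_ofQuaternion]

def equiv (h : c₁ * c₂ = 1) :
    CliffordAlgebra (QuadraticMap.prod Qc Q) ≃ₐ[R] CliffordAlgebra (-Q) ⊗[R] ℍ[R,c₁,0,c₂] :=
  AlgEquiv.ofAlgHom (toTensor Q h) (ofTensor Q h) (toTensor_comp_ofTensor Q h)
    (ofTensor_comp_toTensor Q h)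

end QuaternionPlane

end CliffordAlgebra

namespace QuaternionAlgebra

variable {R : Type*} [CommRing R]

def matrixBasis : Basis (Matrix (Fin 2) (Fin 2) R) (1 : R) 0 1 where
  i := !![1, 0; 0, -1]
  j := !![0, 1; 1, 0]
  k := !![0, 1; -1, 0]
  i_mul_i := by simp [Matrix.one_fin_two]
  j_mul_j := by simp [Matrix.one_fin_two]
  i_mul_j := by simp
  j_mul_i := by simp

theorem matrixBasis_liftHom_apply (x : ℍ[R,1,0,1]) :
    matrixBasis.liftHom x = !![x.re + x.imI, x.imJ + x.imK; x.imJ - x.imK, x.re - x.imI] := by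
  ext i j
  fin_cases i <;> fin_cases j <;>
    simp [Basis.lift, matrixBasis, Matrix.algebraMap_matrix_apply] <;> ring

theorem bijective_matrixBasis_liftHom [Invertible (2 : R)] :
    Function.Bijective (matrixBasis (R := R)).liftHom := by
  refine Function.bijective_iff_has_inverse.mpr ⟨fun m => ⟨⅟2 * (m 0 0 + m 1 1),
    ⅟2 * (m 0 0 - m 1 1), ⅟2 * (m 0 1 + m 1 0), ⅟2 * (m 0 1 - m 1 0)⟩, fun x => ?_, fun m => ?_⟩
  · rw [matrixBasis_liftHom_apply]
    ext <;> simp <;> ring_nf <;> simp only [mul_right_comm _ _ (2 : R), invOf_mul_self, one_mul]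
  · rw [matrixBasis_liftHom_apply]
    ext i j
    fin_cases i <;> fin_cases j <;> simp <;> ring_nf <;>
      simp only [mul_right_comm _ _ (2 : R), invOf_mul_self, one_mul]

noncomputable def equivMatrix [Invertible (2 : R)] : ℍ[R,1,0,1] ≃ₐ[R] Matrix (Fin 2) (Fin 2) R :=
  AlgEquiv.ofBijective _ bijective_matrixBasis_liftHom

end QuaternionAlgebra

section Signature

variable (R : Type*) [CommRing R]

def signWeights (p q : ℕ) : Fin (p + q) → R := fun i => if (i : ℕ) < p then 1 else -1

@[simp]
theorem signWeights_castAdd {p : ℕ} (q : ℕ) (i : Fin p) :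
    signWeights R p q (Fin.castAdd q i) = 1 :=
  if_pos i.isLt

@[simp]
theorem signWeights_natAdd (p : ℕ) {q : ℕ} (i : Fin q) :
    signWeights R p q (Fin.natAdd p i) = -1 :=
  if_neg (by simp)

def signWeightsAddTwoLeftEquiv (p q : ℕ) :
    (weightedSumSquares R (signWeights R (p + 2) q)).IsometryEquiv
      ((CliffordAlgebraQuaternion.Q 1 1).prod (weightedSumSquares R (signWeights R p q))) :=
  let e : Fin 2 ⊕ Fin (p + q) ≃ Fin (p + 2 + q) :=
    ((Equiv.sumCongr (Equiv.refl _) finSumFinEquiv.symm).trans (Equiv.sumAssoc _ _ _).symm).trans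
      ((Equiv.sumCongr ((Equiv.sumComm _ _).trans finSumFinEquiv) (Equiv.refl _)).trans
        finSumFinEquiv)
  (weightedSumSquaresReindex e (v := Sum.elim (fun _ => 1) (signWeights R p q)) (by
    rintro (i | j)
    · simp [e]
    · obtain ⟨x, rfl⟩ := finSumFinEquiv.surjective j
      rcases x with i | i <;> simp [e])).symm.trans (weightedSumSquaresSumElimFinTwoEquiv _ _)

def signWeightsAddTwoRightEquiv (p q : ℕ) :
    (weightedSumSquares R (signWeights R p (q + 2))).IsometryEquiv
      ((CliffordAlgebraQuaternion.Q (-1) (-1)).prod (weightedSumSquares R (signWeights R p q))) :=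
  let e : Fin 2 ⊕ Fin (p + q) ≃ Fin (p + (q + 2)) :=
    ((Equiv.sumCongr (Equiv.refl _) finSumFinEquiv.symm).trans (Equiv.sumComm _ _)).trans
      ((Equiv.sumAssoc _ _ _).trans
        ((Equiv.sumCongr (Equiv.refl _) finSumFinEquiv).trans finSumFinEquiv))
  (weightedSumSquaresReindex e (v := Sum.elim (fun _ => -1) (signWeights R p q)) (by
    rintro (i | j)
    · simp [e]
    · obtain ⟨x, rfl⟩ := finSumFinEquiv.surjective j
      rcases x with i | i <;> simp [e])).symm.trans (weightedSumSquaresSumElimFinTwoEquiv _ _)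

def signWeightsNegEquiv (p q : ℕ) :
    (-weightedSumSquares R (signWeights R p q)).IsometryEquiv
      (weightedSumSquares R (signWeights R q p)) :=
  let e : Fin (p + q) ≃ Fin (q + p) :=
    finSumFinEquiv.symm.trans ((Equiv.sumComm _ _).trans finSumFinEquiv)
  (IsometryEquiv.ofEq (weightedSumSquares_neg _).symm).trans
    (weightedSumSquaresReindex e (by
      intro i
      obtain ⟨x, rfl⟩ := finSumFinEquiv.surjective i
      rcases x with j | j <;> simp [e]))

end Signature

theorem clifford_plus_two_iso (p q : ℕ) :
    Nonempty (CliffordPQ (p + 2) q ≃ₐ[ℝ]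
      (CliffordPQ q p ⊗[ℝ] Matrix (Fin 2) (Fin 2) ℝ)) ∧
    Nonempty (CliffordPQ p (q + 2) ≃ₐ[ℝ]
      (CliffordPQ q p ⊗[ℝ] Quaternion ℝ)) :=
  ⟨⟨(equivOfIsometry (signWeightsAddTwoLeftEquiv ℝ p q)).trans <|
      (QuaternionPlane.equiv _ (mul_one 1)).trans <|
        Algebra.TensorProduct.congr (equivOfIsometry (signWeightsNegEquiv ℝ p q))
          QuaternionAlgebra.equivMatrix⟩,
    ⟨(equivOfIsometry (signWeightsAddTwoRightEquiv ℝ p q)).trans <|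
      (QuaternionPlane.equiv _ (by norm_num)).trans <|
        Algebra.TensorProduct.congr (equivOfIsometry (signWeightsNegEquiv ℝ p q)) AlgEquiv.refl⟩⟩
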